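/- Let (P_n) be a sequence of positive integers with P_n/log n → ∞ and P_n/√(n·log n) → 0 as n → ∞. Then for all sufficiently large n: every n-length code B capable of correcting all 3P_n-far deletable error patterns satisfies R(B) ≥ (n/(6P_n) - 1)·log₂(3P_n/64) - 2. -/

import Mathlib

/-- The three kinds of deletable errors: deletion, erasure, substitution (flip). -/
inductive ErrKind : Type
  | D
  | E
  | F
  deriving DecidableEq

instance instFintypeErrKind : Fintype ErrKind where
  elems := {ErrKind.D, ErrKind.E, ErrKind.F}
  complete := by intro x; cases x <;> simp

/-- A binary word of length `n`. -/
abbrev Word (n : ℕ) := Fin n → Bool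

/-- A deletable error pattern of length `n`: a pair `(e, v)`. -/
abbrev Pattern (n : ℕ) := (Fin n → Bool) × (Fin n → ErrKind)

/-- Process a list of (bit, error indicator, error kind) triples in order,
producing the corrupted string over `{0, 1, ε}` (`none` is the erasure symbol). -/
def corruptAux : List (Bool × Bool × ErrKind) → List (Option Bool)
  | [] => []
  | (xi, false, _) :: rest => some xi :: corruptAux rest
  | (_, true, ErrKind.D) :: rest => corruptAux rest
  | (_, true, ErrKind.E) :: rest => none :: corruptAux rest
  | (xi, true, ErrKind.F) :: rest => some (!xi) :: corruptAux rest

/-- The corruption `F_g(x)` of the word `x` by the pattern `g`. -/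
def corrupt {n : ℕ} (g : Pattern n) (x : Word n) : List (Option Bool) :=
  corruptAux (List.ofFn fun i => (x i, g.1 i, g.2 i))

/-- The corruption `F_g(x, t)` of the first `t` bits of `x` by the first `t` entries of `g`. -/
def corruptPrefix {n : ℕ} (g : Pattern n) (x : Word n) (t : ℕ) : List (Option Bool) :=
  corruptAux ((List.ofFn fun i => (x i, g.1 i, g.2 i)).take t)

/-- The number of errors `Σ_i e_i` of a pattern. -/
def errCount {n : ℕ} (g : Pattern n) : ℕ :=
  (Finset.univ.filter fun i => g.1 i = true).card

/-- `E_n(r)`: the set of `n`-length deletable error patterns with at most `r` errors. -/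
def Epat (n r : ℕ) : Finset (Pattern n) :=
  Finset.univ.filter fun g => errCount g ≤ r

/-- A pattern is `P`-far if any two distinct error positions are at distance at least `P`. -/
def IsPFar {n : ℕ} (P : ℕ) (g : Pattern n) : Prop :=
  ∀ i j : Fin n, i ≠ j → g.1 i = true → g.1 j = true →
    (P : ℤ) ≤ |((i : ℕ) : ℤ) - ((j : ℕ) : ℤ)|

/-- The code `C` corrects all error patterns in `F`. -/
def CorrectsIn {n : ℕ} (C : Finset (Word n)) (F : Set (Pattern n)) : Prop :=
  ∀ x₁ ∈ C, ∀ x₂ ∈ C, x₁ ≠ x₂ → ∀ g₁ ∈ F, ∀ g₂ ∈ F, corrupt g₁ x₁ ≠ corrupt g₂ x₂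

/-- The code `C` corrects all error patterns in `F` in real-time with delay at most `d`. -/
def CorrectsRealTime {n : ℕ} (C : Finset (Word n)) (F : Set (Pattern n)) (d : ℕ) : Prop :=
  ∀ z : ℕ, 1 ≤ z → z ≤ n - d → ∀ x₁ ∈ C, ∀ x₂ ∈ C, x₁ ≠ x₂ →
    ∀ g₁ ∈ F, ∀ g₂ ∈ F, corruptPrefix g₁ x₁ (z + d) ≠ corruptPrefix g₂ x₂ (z + d)

/-- The redundancy `R(C) = n - log₂ #C` of an `n`-length code `C`. -/
noncomputable def redundancy {n : ℕ} (C : Finset (Word n)) : ℝ :=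
  (n : ℝ) - Real.logb 2 (C.card)

/-!
Put a window of length `3P` at every multiple of `6P` and flip one freely chosen bit in each of the
`⌊n/(6P)⌋` windows: this gives `(3P)^⌊n/(6P)⌋` distinct substitution patterns, all `3P`-far.
Substitutions act on words by XOR, so if `B` corrects them, `(x, e) ↦ x ⊕ e` is injective on
`B × {error vectors}`; hence `#B · (3P)^⌊n/(6P)⌋ ≤ 2ⁿ` and `R(B) ≥ ⌊n/(6P)⌋ log₂(3P)`. This
dominates the claimed bound as soon as `3Pₙ ≥ 64`, and `Pₙ → ∞` because `Pₙ / log n → ∞`.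
-/

def flipPattern {n : ℕ} (e : Fin n → Bool) : Pattern n := (e, fun _ => ErrKind.F)

lemma corruptAux_of_forall_F : ∀ l : List (Bool × Bool × ErrKind),
    (∀ t ∈ l, t.2.2 = ErrKind.F) → corruptAux l = l.map fun t => some (xor t.2.1 t.1)
  | [], _ => rfl
  | (x, e, v) :: l, h => by
    obtain rfl : v = ErrKind.F := h _ List.mem_cons_self
    have ih := corruptAux_of_forall_F l fun t ht => h t (List.mem_cons_of_mem _ ht)
    cases e <;> simp [corruptAux, ih]

lemma corrupt_flipPattern {n : ℕ} (e : Fin n → Bool) (x : Word n) :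
    corrupt (flipPattern e) x = List.ofFn fun i => some (xor (e i) (x i)) := by
  rw [corrupt, corruptAux_of_forall_F _ (by simp [List.mem_ofFn, flipPattern]), List.map_ofFn]
  rfl

lemma card_mul_card_le_of_correctsIn_flip {n : ℕ} {B : Finset (Word n)} {F : Set (Pattern n)}
    (hB : CorrectsIn B F) {S : Finset (Fin n → Bool)} (hS : ∀ e ∈ S, flipPattern e ∈ F) :
    B.card * S.card ≤ 2 ^ n := by
  have hinj : Set.InjOn (fun p : Word n × (Fin n → Bool) => fun i => xor (p.2 i) (p.1 i))
      (B ×ˢ S : Finset _) := by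
    rintro ⟨x, e⟩ hxe ⟨x', e'⟩ hxe' h
    simp only [Finset.coe_product, Set.mem_prod, Finset.mem_coe] at hxe hxe'
    obtain rfl : x = x' := by
      by_contra hne
      refine hB x hxe.1 x' hxe'.1 hne _ (hS e hxe.2) _ (hS e' hxe'.2) ?_
      rw [corrupt_flipPattern, corrupt_flipPattern]
      exact congrArg List.ofFn (funext fun i => congrArg some (congrFun h i))
    simpa [funext_iff] using h
  simpa using Finset.card_le_card_of_injOn _ (fun _ _ => Finset.mem_univ _) hinj

section Windows

variable {n P m : ℕ}

def windowFlips (n P : ℕ) (f : Fin m → Fin P) : Fin n → Bool :=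
  fun i => decide (∃ k : Fin m, (i : ℕ) = 2 * P * k + f k)

lemma add_le_of_window_lt {k k' r : ℕ} (hk : k < k') (hr : r < P) (r' : ℕ) :
    2 * P * k + r + P ≤ 2 * P * k' + r' := by
  nlinarith

lemma windowFlips_isPFar (f : Fin m → Fin P) : IsPFar P (flipPattern (windowFlips n P f)) := by
  intro i j hij hi hj
  simp only [flipPattern, windowFlips, decide_eq_true_eq] at hi hj
  obtain ⟨k, hk⟩ := hi
  obtain ⟨k', hk'⟩ := hj
  have hkk : k ≠ k' := by
    rintro rfl
    exact hij (Fin.ext (hk.trans hk'.symm))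
  rcases Fin.lt_or_lt_of_ne hkk with h | h
  · have : (i : ℕ) + P ≤ j := by
      rw [hk, hk']
      exact add_le_of_window_lt h (f k).isLt _
    rw [abs_sub_comm, abs_of_nonneg (by omega)]
    omega
  · have : (j : ℕ) + P ≤ i := by
      rw [hk, hk']
      exact add_le_of_window_lt h (f k').isLt _
    rw [abs_of_nonneg (by omega)]
    omega

lemma windowFlips_injective (hm : 2 * P * m ≤ n) :
    Function.Injective (windowFlips (m := m) n P) := by
  intro f f' h
  funext k
  have hlt : 2 * P * k + f k < n := by
    have := add_le_of_window_lt k.isLt (f k).isLt 0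
    omega
  have hflag : windowFlips n P f' ⟨_, hlt⟩ = true := by
    rw [← h]
    exact decide_eq_true ⟨k, rfl⟩
  obtain ⟨k', hk'⟩ := of_decide_eq_true hflag
  change 2 * P * k + f k = 2 * P * k' + f' k' at hk'
  rcases lt_trichotomy (k : ℕ) k' with hkk' | hkk' | hkk'
  · have := add_le_of_window_lt hkk' (f k).isLt (f' k')
    omega
  · obtain rfl := Fin.ext hkk'
    exact Fin.ext (by omega)
  · have := add_le_of_window_lt hkk' (f' k').isLt (f k)
    omega

lemma card_mul_pow_le_of_correctsIn_far {B : Finset (Word n)}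
    (hB : CorrectsIn B {g | IsPFar P g}) : B.card * P ^ (n / (2 * P)) ≤ 2 ^ n := by
  have hm : 2 * P * (n / (2 * P)) ≤ n := Nat.mul_div_le n _
  have := card_mul_card_le_of_correctsIn_flip hB
    (S := Finset.univ.image (windowFlips (m := n / (2 * P)) n P))
    (by simpa using fun f => windowFlips_isPFar f)
  rwa [Finset.card_image_of_injective _ (windowFlips_injective hm), Finset.card_univ,
    Fintype.card_fun, Fintype.card_fin, Fintype.card_fin] at this

end Windows

lemma logb_le_redundancy {n : ℕ} {B : Finset (Word n)} {a : ℝ} (ha : 0 < a) (ha' : a ≤ 2 ^ n)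
    (hB : B.card * a ≤ 2 ^ n) : Real.logb 2 a ≤ redundancy B := by
  have hlog : Real.logb 2 ((2 : ℝ) ^ n) = n := by
    rw [Real.logb_pow, Real.logb_self_eq_one one_lt_two, mul_one]
  rw [redundancy, ← hlog]
  rcases B.card.eq_zero_or_pos with hc | hc
  · simpa [hc] using Real.logb_le_logb_of_le one_lt_two ha ha'
  · have hc : (0 : ℝ) < B.card := by exact_mod_cast hc
    have := Real.logb_le_logb_of_le one_lt_two (by positivity) hB
    rw [Real.logb_mul hc.ne' ha.ne'] at this
    linarith

lemma redundancy_ge_of_correctsIn_far {n P : ℕ} (hP : 0 < P) {B : Finset (Word n)}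
    (hB : CorrectsIn B {g | IsPFar P g}) :
    (n / (2 * P) : ℕ) * Real.logb 2 P ≤ redundancy B := by
  have hpow : P ^ (n / (2 * P)) ≤ 2 ^ n :=
    calc P ^ (n / (2 * P)) ≤ (2 ^ P) ^ (n / (2 * P)) :=
          Nat.pow_le_pow_left Nat.lt_two_pow_self.le _
      _ = 2 ^ (P * (n / (2 * P))) := (pow_mul _ _ _).symm
      _ ≤ 2 ^ n := Nat.pow_le_pow_right two_pos (by nlinarith [Nat.mul_div_le n (2 * P)])
  rw [← Real.logb_pow]
  apply logb_le_redundancy (by positivity) (by exact_mod_cast hpow)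
  exact_mod_cast card_mul_pow_le_of_correctsIn_far hB

lemma div_sub_one_mul_logb_div_le {n d : ℕ} {c x : ℝ} (hc : 1 ≤ c) (hcx : c ≤ x) :
    ((n : ℝ) / d - 1) * Real.logb 2 (x / c) ≤ (n / d : ℕ) * Real.logb 2 x := by
  have hfloor : (n : ℝ) / d - 1 ≤ (n / d : ℕ) := by
    simpa [Nat.floor_div_eq_div] using (Nat.sub_one_lt_floor ((n : ℝ) / d)).le
  have hx : 0 < x := by linarith
  calc ((n : ℝ) / d - 1) * Real.logb 2 (x / c)
      ≤ (n / d : ℕ) * Real.logb 2 (x / c) :=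
        mul_le_mul_of_nonneg_right hfloor
          (Real.logb_nonneg one_lt_two ((one_le_div₀ (by linarith)).mpr hcx))
    _ ≤ (n / d : ℕ) * Real.logb 2 x :=
        mul_le_mul_of_nonneg_left
          (Real.logb_le_logb_of_le one_lt_two (by positivity) (div_le_self hx.le hc))
          (Nat.cast_nonneg _)

lemma Filter.Tendsto.atTop_of_div_atTop {α : Type*} {l : Filter α} {f g : α → ℝ}
    (hfg : Tendsto (fun a => f a / g a) l atTop) (hg : Tendsto g l atTop) :
    Tendsto f l atTop := by
  refine (hfg.atTop_mul_atTop₀ hg).congr' ?_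
  filter_upwards [hg.eventually_gt_atTop 0] with a ha
  field_simp

theorem stmt3_general (P : ℕ → ℕ)
    (hP1 : Filter.Tendsto (fun n : ℕ => (P n : ℝ) / Real.log n) Filter.atTop Filter.atTop) :
    ∃ N : ℕ, ∀ n : ℕ, N ≤ n → ∀ B : Finset (Word n),
      CorrectsIn B {g : Pattern n | IsPFar (3 * P n) g} →
      ((n : ℝ) / (6 * (P n : ℝ)) - 1) * Real.logb 2 (3 * (P n : ℝ) / 64) - 2 ≤
        redundancy B := by
  have hP : Filter.Tendsto P Filter.atTop Filter.atTop := tendsto_natCast_atTop_iff.mp <|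
    hP1.atTop_of_div_atTop (Real.tendsto_log_atTop.comp tendsto_natCast_atTop_atTop)
  obtain ⟨N, hN⟩ := Filter.eventually_atTop.mp (hP.eventually_ge_atTop 22)
  refine ⟨N, fun n hn B hB => ?_⟩
  have hP22 : 22 ≤ P n := hN n hn
  have hR := redundancy_ge_of_correctsIn_far (by omega : 0 < 3 * P n) hB
  rw [show 2 * (3 * P n) = 6 * P n by ring] at hR
  have := div_sub_one_mul_logb_div_le (n := n) (d := 6 * P n) (x := 3 * P n) (by norm_num)
    (show (64 : ℝ) ≤ 3 * P n by norm_cast; omega)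
  push_cast at hR this
  linarith

/-- Redundancy lower bound for codes correcting all `3Pₙ`-far deletable error patterns,
growing `Pₙ` (converse part of Theorem 1 of the paper). -/
theorem stmt3 (P : ℕ → ℕ) (hPpos : ∀ n, 0 < P n)
    (hP1 : Filter.Tendsto (fun n : ℕ => (P n : ℝ) / Real.log n) Filter.atTop Filter.atTop)
    (hP2 : Filter.Tendsto (fun n : ℕ => (P n : ℝ) / Real.sqrt ((n : ℝ) * Real.log n))
      Filter.atTop (nhds 0)) :
    ∃ N : ℕ, ∀ n : ℕ, N ≤ n → ∀ B : Finset (Word n),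
      CorrectsIn B {g : Pattern n | IsPFar (3 * P n) g} →
      ((n : ℝ) / (6 * (P n : ℝ)) - 1) * Real.logb 2 (3 * (P n : ℝ) / 64) - 2 ≤
        redundancy B :=
  stmt3_general P hP1
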